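/- Let F ⊆ ℓ∞(ℤ) be a shift-invariant concrete predual of ℓ₁(ℤ) and let λ ∈ ℂ with |λ| = 1. Then λδ₀ is not a weak*-limit point of the point masses: λδ₀ does not belong to the σ(ℓ₁(ℤ),F)-closure of the set {δ_n : n ∈ ℤ, n ≠ 0}. -/

import Mathlib

open scoped ENNReal
open Filter Topology

noncomputable section

/-- `ℓ₁(ℤ)`, the complex Banach space of absolutely summable bilateral sequences. -/
abbrev ellOne : Type := lp (fun _ : ℤ => ℂ) 1

/-- `ℓ∞(ℤ)`, the complex Banach space of bounded bilateral sequences. -/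
abbrev ellInf : Type := lp (fun _ : ℤ => ℂ) ∞

lemma memℓp_zshift (m : ℤ) (x : ellInf) : Memℓp (fun n : ℤ => x (n - m)) ∞ := by
  have hx := memℓp_infty_iff.1 (lp.memℓp x)
  refine memℓp_infty (hx.mono ?_)
  rintro r ⟨n, rfl⟩
  exact ⟨n - m, rfl⟩

/-- translation by `m` on `ℓ∞(ℤ)`: `(zshift m x) n = x (n - m)`.  In particular `zshift 1` is
the bilateral shift `σ`, with `σ(x)(n) = x (n - 1)`, and `zshift m = σ^m`. -/
def zshift (m : ℤ) (x : ellInf) : ellInf := ⟨fun n => x (n - m), memℓp_zshift m x⟩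

/-- `F ⊆ ℓ∞(ℤ)` is a concrete predual of `ℓ₁(ℤ)`: a closed subspace such that the canonical
map `ι_F : ℓ₁(ℤ) → F*`, `⟨ι_F a, x⟩ = ∑_n x(n) a(n)`, is an isomorphism of Banach spaces
(a bounded linear bijection with bounded inverse, not necessarily isometric). -/
def IsConcretePredual (F : Submodule ℂ ellInf) : Prop :=
  IsClosed (F : Set ellInf) ∧
  ∃ e : ellOne ≃L[ℂ] StrongDual ℂ F,
    ∀ (a : ellOne) (x : F), e a x = ∑' n : ℤ, (x : ellInf) n * a n

/-- The weak* topology `σ(ℓ₁(ℤ), F)` on `ℓ₁(ℤ)` induced by a subspace `F ⊆ ℓ∞(ℤ)`: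
the coarsest topology making `a ↦ ∑_n x(n) a(n)` continuous for every `x ∈ F`. -/
def weakStar (F : Submodule ℂ ellInf) : TopologicalSpace ellOne :=
  ⨅ x ∈ F, TopologicalSpace.induced (fun a : ellOne => ∑' n : ℤ, x n * a n) inferInstance

/-- the point mass `δ_t ∈ ℓ₁(ℤ)`. -/
def deltaZ (t : ℤ) : ellOne := lp.single 1 t 1

/-!
Pull everything back to the weak* dual of `F` through `ι_F`. Since `F* ≅ ℓ₁(ℤ)` is
norm-separable, a Baire category argument on the weak*-compact closure of the bounded set
`{ι_F(μ δ_n) : |μ| = 1}` gives a weak*-open set `V` that contains some `ι_F(μ₀ δ_{n₀})` and in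
which all these points are norm-close to each other; as `‖μ δ_m - ν δ_n‖ ≥ 1` for `m ≠ n`, every
`ι_F(ν δ_n)` in `V` has `n = n₀`. The adjoint of a shift, times `μ₀ λ⁻¹`, is weak*-continuous,
maps `λ δ₀` to `μ₀ δ_{n₀}` and `δ_n` to `μ₀ λ⁻¹ δ_{n + n₀}`, so a weak*-approximation of `λ δ₀`
by the `δ_n` with `n ≠ 0` would put some `ι_F(μ₀ λ⁻¹ δ_{n + n₀})` with `n ≠ 0` into `V`.
-/

open TopologicalSpace Metric WeakDual

theorem lp.separableSpace {α : Type*} [Countable α] {E : α → Type*}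
    [∀ i, NormedAddCommGroup (E i)] [∀ i, SeparableSpace (E i)] {p : ℝ≥0∞} [Fact (1 ≤ p)]
    (hp : p ≠ ∞) : SeparableSpace (lp E p) := by
  classical
  let T : Set (lp E p) :=
    ⋃ s : Finset α, Set.range fun v : ∀ i, E i => ∑ i ∈ s, lp.single p i (v i)
  have hT : IsSeparable T := .iUnion fun s => isSeparable_range <|
    continuous_finsetSum s fun i _ => (lp.isometry_single i).continuous.comp (continuous_apply i)
  have hdense : ∀ f : lp E p, f ∈ closure T := fun f =>
    mem_closure_of_tendsto (lp.hasSum_single hp f) <|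
      .of_forall fun s => Set.mem_iUnion.2 ⟨s, fun i => f i, rfl⟩
  exact isSeparable_univ_iff.1 (hT.closure.mono fun f _ => hdense f)

section Shift

lemma zshift_zero (x : ellInf) : zshift 0 x = x :=
  lp.ext <| funext fun n => congrArg x (sub_zero n)

lemma zshift_zshift (a b : ℤ) (x : ellInf) : zshift a (zshift b x) = zshift (a + b) x :=
  lp.ext <| funext fun n => congrArg x (sub_sub n a b)

def zshiftL (m : ℤ) : ellInf →L[ℂ] ellInf :=
  LinearMap.mkContinuous
    { toFun := zshift m
      map_add' := fun _ _ => rfl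
      map_smul' := fun _ _ => rfl }
    1 fun x => by
      rw [one_mul]
      exact lp.norm_le_of_forall_le (norm_nonneg x) fun n =>
        lp.norm_apply_le_norm ENNReal.top_ne_zero x (n - m)

variable {F : Submodule ℂ ellInf}

lemma zshift_mem_of_image_eq (hinv : zshift 1 '' (F : Set ellInf) = F) (k : ℤ) {x : ellInf}
    (hx : x ∈ F) : zshift k x ∈ F := by
  have hsucc : ∀ y ∈ F, zshift 1 y ∈ F := fun y hy => by
    rw [← SetLike.mem_coe, ← hinv]
    exact Set.mem_image_of_mem _ hy
  have hpred : ∀ y ∈ F, zshift (-1) y ∈ F := by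
    intro y hy
    obtain ⟨z, hz, rfl⟩ : y ∈ zshift 1 '' (F : Set ellInf) := hinv.symm ▸ hy
    rwa [zshift_zshift, neg_add_cancel, zshift_zero]
  induction k using Int.induction_on with
  | zero => rwa [zshift_zero]
  | succ i ih => simpa only [zshift_zshift, add_comm] using hsucc _ ih
  | pred i ih => simpa only [zshift_zshift, neg_add_eq_sub] using hpred _ ih

def zshiftOn (hinv : zshift 1 '' (F : Set ellInf) = F) (k : ℤ) : F →L[ℂ] F :=
  ((zshiftL k).comp F.subtypeL).codRestrict F fun x => zshift_mem_of_image_eq hinv k x.2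

end Shift

section Predual

variable {F : Submodule ℂ ellInf} (e : ellOne → StrongDual ℂ F)

lemma continuous_weakStar_toWeakDual_comp
    (he : ∀ (a : ellOne) (x : F), e a x = ∑' n : ℤ, (x : ellInf) n * a n) (S : F →L[ℂ] F) :
    Continuous[weakStar F, _] fun a => StrongDual.toWeakDual ((e a).comp S) := by
  let := weakStar F
  refine continuous_of_continuous_eval fun y => ?_
  have : Continuous fun a : ellOne => ∑' n : ℤ, (S y : ellInf) n * a n :=
    continuous_iff_le_induced.2 (iInf₂_le (S y : ellInf) (S y).2)
  simpa [he] using this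

lemma apply_deltaZ
    (he : ∀ (a : ellOne) (x : F), e a x = ∑' n : ℤ, (x : ellInf) n * a n) (n : ℤ) (x : F) :
    e (deltaZ n) x = (x : ellInf) n := by
  rw [he, tsum_eq_single n fun m hm => by simp [deltaZ, Pi.single_eq_of_ne hm]]
  simp [deltaZ]

lemma comp_zshiftOn_deltaZ
    (he : ∀ (a : ellOne) (x : F), e a x = ∑' n : ℤ, (x : ellInf) n * a n)
    (hinv : zshift 1 '' (F : Set ellInf) = F) (k n : ℤ) :
    (e (deltaZ n)).comp (zshiftOn hinv k) = e (deltaZ (n - k)) := by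
  ext x
  simp only [ContinuousLinearMap.comp_apply, apply_deltaZ e he]
  rfl

end Predual

section Baire

variable {𝕜 E : Type*} [NontriviallyNormedField 𝕜] [SeminormedAddCommGroup E] [NormedSpace 𝕜 E]
  [SeparableSpace (StrongDual 𝕜 E)]

theorem WeakDual.exists_isOpen_inter_subset_closedBall {K : Set (WeakDual 𝕜 E)}
    (hK : IsCompact K) (hne : K.Nonempty) {ε : ℝ} (hε : 0 < ε) :
    ∃ V, IsOpen V ∧ (V ∩ K).Nonempty ∧ ∃ c, V ∩ K ⊆ toStrongDual ⁻¹' closedBall c ε := by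
  have : CompactSpace K := isCompact_iff_compactSpace.mp hK
  have : Nonempty K := hne.to_subtype
  let c := denseSeq (StrongDual 𝕜 E)
  let f : ℕ → Set K := fun i => (↑) ⁻¹' (toStrongDual ⁻¹' closedBall (c i) ε)
  have hclosed : ∀ i, IsClosed (f i) := fun i =>
    (isClosed_closedBall (c i) ε).preimage continuous_subtype_val
  have hcover : ⋃ i, f i = Set.univ := Set.eq_univ_of_forall fun φ => by
    obtain ⟨i, hi⟩ := (denseRange_denseSeq _).exists_dist_lt (toStrongDual φ.1) hε
    exact Set.mem_iUnion.2 ⟨i, mem_closedBall.2 hi.le⟩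
  obtain ⟨i, φ, hφ⟩ := nonempty_interior_of_iUnion_of_closed hclosed hcover
  obtain ⟨V, hV, hVi⟩ := isOpen_induced_iff.1 (isOpen_interior (s := f i))
  refine ⟨V, hV, ⟨φ, ?_, φ.2⟩, c i, fun ψ hψ => ?_⟩
  · exact (by rw [hVi]; exact hφ : φ ∈ (↑) ⁻¹' V)
  · have : (⟨ψ, hψ.2⟩ : K) ∈ interior (f i) := by rw [← hVi]; exact hψ.1
    exact (interior_subset this : _ ∈ f i)

theorem WeakDual.exists_mem_isOpen_forall_norm_sub_le [ProperSpace 𝕜] {T : Set (WeakDual 𝕜 E)}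
    (hT : Bornology.IsBounded T) (hne : T.Nonempty) {ε : ℝ} (hε : 0 < ε) :
    ∃ τ ∈ T, ∃ V, IsOpen V ∧ τ ∈ V ∧
      ∀ t ∈ V ∩ T, ‖toStrongDual t - toStrongDual τ‖ ≤ 2 * ε := by
  obtain ⟨V, hV, ⟨κ, hκV, hκ⟩, c, hVc⟩ := exists_isOpen_inter_subset_closedBall
    (isCompact_of_bounded_of_closed (isBounded_closure hT) isClosed_closure) hne.closure hε
  obtain ⟨τ, hτV, hτ⟩ := mem_closure_iff.1 hκ V hV hκV
  refine ⟨τ, hτ, V, hV, hτV, fun t ht => ?_⟩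
  rw [← dist_eq_norm, two_mul]
  exact (dist_triangle_right _ _ c).trans <|
    add_le_add (hVc ⟨ht.1, subset_closure ht.2⟩) (hVc ⟨hτV, subset_closure hτ⟩)

end Baire

lemma norm_le_norm_smul_deltaZ_sub (μ ν : ℂ) {m n : ℤ} (h : n ≠ m) :
    ‖μ‖ ≤ ‖μ • deltaZ m - ν • deltaZ n‖ := by
  have hm : (μ • deltaZ m - ν • deltaZ n) m = μ := by
    simp only [lp.coeFn_sub, lp.coeFn_smul, Pi.sub_apply, Pi.smul_apply, deltaZ,
      lp.single_apply_self, lp.single_apply_ne _ _ _ h.symm]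
    simp
  simpa only [hm] using lp.norm_apply_le_norm one_ne_zero (μ • deltaZ m - ν • deltaZ n) m

theorem exists_isOpen_forall_smul_deltaZ_mem_imp_eq {G : Type*} [NormedAddCommGroup G]
    [NormedSpace ℂ G] (e : ellOne ≃L[ℂ] StrongDual ℂ G) :
    ∃ μ : ℂ, ‖μ‖ = 1 ∧ ∃ n₀ : ℤ, ∃ V : Set (WeakDual ℂ G), IsOpen V ∧
      StrongDual.toWeakDual (e (μ • deltaZ n₀)) ∈ V ∧
      ∀ ν : ℂ, ‖ν‖ = 1 → ∀ n, StrongDual.toWeakDual (e (ν • deltaZ n)) ∈ V → n = n₀ := by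
  have : SeparableSpace ellOne := lp.separableSpace ENNReal.one_ne_top
  have : SeparableSpace (StrongDual ℂ G) := e.surjective.denseRange.separableSpace e.continuous
  let T : Set (WeakDual ℂ G) :=
    {ψ | ∃ μ : ℂ, ‖μ‖ = 1 ∧ ∃ n, ψ = StrongDual.toWeakDual (e (μ • deltaZ n))}
  have hT : Bornology.IsBounded T := (isBounded_closedBall 0 ‖e.toContinuousLinearMap‖).subset <| by
    rintro _ ⟨μ, hμ, n, rfl⟩
    simpa [norm_smul, hμ, deltaZ, lp.norm_single] using
      e.toContinuousLinearMap.le_opNorm (μ • deltaZ n)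
  obtain ⟨ε, hε, hεe⟩ := exists_pos_mul_lt one_pos (‖(e.symm : StrongDual ℂ G →L[ℂ] ellOne)‖ * 2)
  obtain ⟨_, ⟨μ, hμ, n₀, rfl⟩, V, hV, hτV, hclose⟩ :=
    exists_mem_isOpen_forall_norm_sub_le hT ⟨_, 1, norm_one, 0, rfl⟩ hε
  refine ⟨μ, hμ, n₀, V, hV, hτV, fun ν hν n hnV => ?_⟩
  by_contra hn
  have hnear := hclose _ ⟨hnV, ν, hν, n, rfl⟩
  have hsymm := e.symm.toContinuousLinearMap.le_opNorm (e (ν • deltaZ n - μ • deltaZ n₀))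
  rw [ContinuousLinearEquiv.coe_coe, e.symm_apply_apply, map_sub] at hsymm
  have hfar := ((norm_le_norm_smul_deltaZ_sub μ ν hn).trans_eq (norm_sub_rev _ _)).trans <|
    hsymm.trans (mul_le_mul_of_nonneg_left hnear (norm_nonneg _))
  linarith

/-- Statement 14.  If `F` is a shift-invariant concrete predual of `ℓ₁(ℤ)` and `|λ| = 1`, then
`λδ₀` is not in the `σ(ℓ₁(ℤ),F)`-closure of `{δ_n : n ∈ ℤ, n ≠ 0}`. -/
theorem statement_14 (F : Submodule ℂ ellInf)
    (hinv : zshift 1 '' (F : Set ellInf) = (F : Set ellInf))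
    (hF : IsConcretePredual F) (lam : ℂ) (hlam : ‖lam‖ = 1) :
    lam • deltaZ 0 ∉
      @closure _ (weakStar F) {a : ellOne | ∃ n : ℤ, n ≠ 0 ∧ a = deltaZ n} := by
  obtain ⟨-, e, he⟩ := hF
  obtain ⟨μ, hμ, n₀, V, hV, hμV, hV_eq⟩ := exists_isOpen_forall_smul_deltaZ_mem_imp_eq e
  intro hmem
  let c := μ * lam⁻¹
  let G : ellOne → WeakDual ℂ F :=
    fun a => c • StrongDual.toWeakDual ((e a).comp (zshiftOn hinv (-n₀)))
  have hG : Continuous[weakStar F, _] G := @Continuous.comp _ _ _ (weakStar F) _ _ _ _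
    (continuous_const_smul c) (continuous_weakStar_toWeakDual_comp e he _)
  have hGdelta : ∀ n, G (deltaZ n) = StrongDual.toWeakDual (e (c • deltaZ (n + n₀))) := by
    intro n
    simp [G, comp_zshiftOn_deltaZ e he]
  have hGlam : G (lam • deltaZ 0) = StrongDual.toWeakDual (e (μ • deltaZ n₀)) := by
    have hcl : c * lam = μ := by
      rw [mul_assoc, inv_mul_cancel₀ (norm_ne_zero_iff.1 (hlam ▸ one_ne_zero)), mul_one]
    simp [G, comp_zshiftOn_deltaZ e he, smul_smul, hcl]
  have hGV : IsOpen[weakStar F] (G ⁻¹' V) :=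
    @Continuous.isOpen_preimage _ _ (weakStar F) _ _ hG V hV
  obtain ⟨_, hnV, n, hn, rfl⟩ := (@mem_closure_iff _ (weakStar F) _ _).1 hmem _ hGV
    (by rw [Set.mem_preimage, hGlam]; exact hμV)
  have hc : ‖c‖ = 1 := by simp [c, hμ, hlam]
  have hn₀ := hV_eq c hc _ (by rw [← hGdelta n]; exact hnV)
  omega
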